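/- arXiv:1207.2398 — 4 statements merged into one kernel-verified Lean document; each statement's English description precedes it below -/
import Mathlib

section
/- If a, b, n are positive integers such that a²n/(2n+4) and b²n/(2n+4) are both integers, then (a+b)²n/(2n+4) is also an integer. -/
/-!
Multiplying the two hypotheses gives `m² ∣ (abn)²`, hence `m ∣ abn` by unique factorization,
and the cross term `2abn` of `(a + b)²n = a²n + 2abn + b²n` is divisible by `m` as well.
-/

theorem dvd_mul_mul_of_dvd_sq_mul {R : Type*} [CommMonoidWithZero R] [UniqueFactorizationMonoid R]
    {m a b n : R} (ha : m ∣ a ^ 2 * n) (hb : m ∣ b ^ 2 * n) : m ∣ a * b * n := by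
  have hsq : m ^ 2 ∣ (a * b * n) ^ 2 :=
    calc m ^ 2 = m * m := sq m
      _ ∣ a ^ 2 * n * (b ^ 2 * n) := mul_dvd_mul ha hb
      _ = (a * b * n) ^ 2 := by rw [mul_pow, mul_pow, sq n, mul_mul_mul_comm]
  exact (UniqueFactorizationMonoid.pow_dvd_pow_iff_dvd two_ne_zero).mp hsq

theorem dvd_add_sq_mul {R : Type*} [CommSemiring R] [UniqueFactorizationMonoid R]
    {m a b n : R} (ha : m ∣ a ^ 2 * n) (hb : m ∣ b ^ 2 * n) : m ∣ (a + b) ^ 2 * n := by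
  have hexpand : (a + b) ^ 2 * n = a ^ 2 * n + 2 * (a * b * n) + b ^ 2 * n := by ring
  rw [hexpand]
  exact (ha.add ((dvd_mul_mul_of_dvd_sq_mul ha hb).mul_left 2)).add hb

theorem stmt0_general (a b n : ℕ)
    (h1 : (2 * n + 4) ∣ a ^ 2 * n) (h2 : (2 * n + 4) ∣ b ^ 2 * n) :
    (2 * n + 4) ∣ (a + b) ^ 2 * n :=
  dvd_add_sq_mul h1 h2

/-- If `a`, `b`, `n` are positive integers such that `a²n/(2n+4)` and `b²n/(2n+4)` are both
integers, then `(a+b)²n/(2n+4)` is also an integer. -/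
theorem stmt0 (a b n : ℕ) (ha : 0 < a) (hb : 0 < b) (hn : 0 < n)
    (h1 : (2 * n + 4) ∣ a ^ 2 * n) (h2 : (2 * n + 4) ∣ b ^ 2 * n) :
    (2 * n + 4) ∣ (a + b) ^ 2 * n :=
  stmt0_general a b n h1 h2
end

section
/- Let n be a positive even integer, write n = 2a, and let m be an odd integer such that -2m² + (n+2) is divisible by 8(n+2). Then n is divisible by 16. -/
/-!
Write `X = -2m² + (n + 2)`. Since `8(n + 2) ∣ X` is even and `2m²` is even, `n + 2` is even,
so in fact `16 ∣ 8(n + 2) ∣ X`. For odd `m`, `8 ∣ m² - 1`, i.e. `16 ∣ 2m² - 2`, and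
`n = X + (2m² - 2)`.
-/

theorem stmt1_general (n m : ℤ) (hm : Odd m)
    (h : (8 * (n + 2)) ∣ (-2 * m ^ 2 + (n + 2))) : (16 : ℤ) ∣ n := by
  have hX_even : (2 : ℤ) ∣ -2 * m ^ 2 + (n + 2) :=
    (Dvd.intro (4 * (n + 2)) (by ring)).trans h
  have hn2_even : (2 : ℤ) ∣ n + 2 :=
    (dvd_add_right (Dvd.intro (-m ^ 2) (by ring))).mp hX_even
  have hX : (16 : ℤ) ∣ -2 * m ^ 2 + (n + 2) := (mul_dvd_mul_left 8 hn2_even).trans h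
  have hm2 : (16 : ℤ) ∣ 2 * (m ^ 2 - 1) :=
    mul_dvd_mul_left 2 (Int.eight_dvd_sq_sub_one_of_odd hm)
  have key : n = (-2 * m ^ 2 + (n + 2)) + 2 * (m ^ 2 - 1) := by ring
  exact key ▸ dvd_add hX hm2

/-- Let `n` be a positive even integer, `n = 2a`, and let `m` be an odd integer such that
`-2m² + (n+2)` is divisible by `8(n+2)`. Then `n` is divisible by `16`. -/
theorem stmt1 (n a m : ℤ) (hn : 0 < n) (hna : n = 2 * a) (hm : Odd m)
    (h : (8 * (n + 2)) ∣ (-2 * m ^ 2 + (n + 2))) : (16 : ℤ) ∣ n :=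
  stmt1_general n m hm h
end

section
/- Fix n ≥ 0. For chiral labels (l₁,−l₁), (l₂,−l₂) with l₁,l₂ ∈ {0,…,n}, exactly one term in the fusion product (l₁,m₁)(l₂,m₂) = ⊕_{|l₁−l₂| ≤ l ≤ min(l₁+l₂,2n−l₁−l₂), l+l₁+l₂ ∈ 2ℤ} (l, m₁+m₂) is again a chiral label (of the form (l,−l)), and it occurs precisely when l = l₁+l₂ ≤ n; if l₁+l₂ > n no chiral label occurs in the product. -/
/-- Fix `n ≥ 0`. For chiral labels `(l₁,−l₁)`, `(l₂,−l₂)` with `l₁,l₂ ∈ {0,…,n}`, a summand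
`(l, −l₁−l₂ mod (2n+4))` of the fusion product is a chiral label (i.e. `l ≤ n` and
`l ≡ l₁+l₂ mod (2n+4)`) precisely when `l₁+l₂ ≤ n` and `l = l₁+l₂`; in particular if
`l₁+l₂ > n` no chiral label occurs in the product. -/
theorem stmt12 (n l₁ l₂ : ℕ) (h₁ : l₁ ≤ n) (h₂ : l₂ ≤ n) (l : ℕ) :
    ((max l₁ l₂ - min l₁ l₂ ≤ l) ∧ l ≤ min (l₁ + l₂) (2 * n - l₁ - l₂) ∧
      Even (l + l₁ + l₂) ∧ l ≤ n ∧ l ≡ l₁ + l₂ [MOD 2 * n + 4])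
    ↔ (l₁ + l₂ ≤ n ∧ l = l₁ + l₂) := by
  constructor
  · rintro ⟨-, -, -, hl_le_n, hmod⟩
    have hl_eq : l = l₁ + l₂ := hmod.eq_of_lt_of_lt (by omega) (by omega)
    exact ⟨hl_eq ▸ hl_le_n, hl_eq⟩
  · rintro ⟨hsum, rfl⟩
    exact ⟨by omega, by omega, ⟨l₁ + l₂, by ring⟩, hsum, Nat.ModEq.refl _⟩
end

section
/- Let n ≡ 0 mod 16 and let k be an odd positive integer with nk²/(8(n+2)) ∈ ℤ. Then −(k+n+2)²/(4(n+2)) + k²/8 ∈ ℤ, i.e. the sector σ^kτ = (l,m,s) with appropriate labels has statistics phase exp(2πi(−(k+n+2)²/(4(n+2)) + k²/8)) = 1. Moreover, for any positive integer a, −(2ak+n+2)²/(4(n+2)) + (2ak)²/8 ∈ 1/2 + ℤ, i.e. σ^{2ak}τ has statistics phase −1. -/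
/-!
Expanding the square, `−(x+n+2)²/(4(n+2)) + x²/8 = n x²/(8(n+2)) − (x+1)/2 − n/4`.
For `x = k` all three terms are integers (by the divisibility hypothesis, `k` odd and `4 ∣ n`);
for `x = 2ak` the first term is `4a²` times the integer `nk²/(8(n+2))` and `(x+1)/2`
is a half-integer.
-/

theorem statisticsPhase_eq {K : Type*} [Field K] [CharZero K] (n x : K) (hn : n + 2 ≠ 0) :
    -(x + n + 2) ^ 2 / (4 * (n + 2)) + x ^ 2 / 8 =
      n * x ^ 2 / (8 * (n + 2)) - (x + 1) / 2 - n / 4 := by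
  field_simp
  ring

theorem stmt15_general (n k : ℕ) (h16 : 16 ∣ n) (hkodd : Odd k)
    (hdvd : (8 * (n + 2)) ∣ n * k ^ 2) :
    (∃ z : ℤ, -(((k : ℚ) + n + 2) ^ 2) / (4 * ((n : ℚ) + 2)) + (k : ℚ) ^ 2 / 8 = z) ∧
    (∀ a : ℕ, 0 < a → ∃ z : ℤ,
      -(((2 * a * k : ℕ) : ℚ) + n + 2) ^ 2 / (4 * ((n : ℚ) + 2)) +
        ((2 * a * k : ℕ) : ℚ) ^ 2 / 8 = 1 / 2 + z) := by
  obtain ⟨m, hm⟩ := h16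
  obtain ⟨c, hc⟩ := hdvd
  have hn2 : (n : ℚ) + 2 ≠ 0 := by positivity
  have hn4 : (n : ℚ) / 4 = 4 * m := by rw [hm]; push_cast; ring
  have hc : (n : ℚ) * k ^ 2 / (8 * (n + 2)) = c := by
    rw [div_eq_iff (by positivity)]
    exact_mod_cast hc.trans (mul_comm _ _)
  constructor
  · obtain ⟨j, hj⟩ := hkodd
    refine ⟨c - j - 1 - 4 * m, ?_⟩
    rw [statisticsPhase_eq _ _ hn2, hc, hn4, hj]
    push_cast
    ring
  · intro a _
    refine ⟨4 * a ^ 2 * c - a * k - 4 * m - 1, ?_⟩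
    have hc' : (n : ℚ) * ((2 * a * k : ℕ) : ℚ) ^ 2 / (8 * (n + 2)) = 4 * a ^ 2 * c := by
      rw [← hc]
      push_cast
      ring
    rw [statisticsPhase_eq _ _ hn2, hc', hn4]
    push_cast
    ring

/-- Let `n ≡ 0 mod 16` and let `k` be an odd positive integer with `nk²/(8(n+2)) ∈ ℤ`. Then
`−(k+n+2)²/(4(n+2)) + k²/8 ∈ ℤ` (the sector `σᵏτ` has statistics phase `1`), and for every
positive integer `a`, `−(2ak+n+2)²/(4(n+2)) + (2ak)²/8 ∈ 1/2 + ℤ` (the sector `σ^{2ak}τ`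
has statistics phase `−1`). -/
theorem stmt15 (n k : ℕ) (hn : 0 < n) (h16 : 16 ∣ n) (hk : 0 < k) (hkodd : Odd k)
    (hdvd : (8 * (n + 2)) ∣ n * k ^ 2) :
    (∃ z : ℤ, -(((k : ℚ) + n + 2) ^ 2) / (4 * ((n : ℚ) + 2)) + (k : ℚ) ^ 2 / 8 = z) ∧
    (∀ a : ℕ, 0 < a → ∃ z : ℤ,
      -(((2 * a * k : ℕ) : ℚ) + n + 2) ^ 2 / (4 * ((n : ℚ) + 2)) +
        ((2 * a * k : ℕ) : ℚ) ^ 2 / 8 = 1 / 2 + z) :=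
  stmt15_general n k h16 hkodd hdvd
end
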